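/- Let T > 0, γ ≥ 0, let V be a d×d real diagonal matrix with positive diagonal entries, Σ a d×d real symmetric positive semidefinite matrix, and 𝐀 a d×d real diagonal matrix with positive diagonal entries. Then there exists α₀ > 0, depending only on T, γ, V, Σ and 𝐀, such that for every d×d real diagonal matrix 𝔸 with nonnegative diagonal entries and operator norm |𝔸| ≤ α₀, the two-point boundary value problem E''(t) = −2·V·𝔸·E'(t) + 2γ·V·Σ·E(t) for t ∈ [0,T], E(0) = E₀, E'(T) + 4·V·𝐀·E(T) = 0, has exactly one twice continuously differentiable solution E : [0,T] → ℝ^d, for every prescribed initial vector E₀ ∈ ℝ^d. -/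

import Mathlib

open Matrix Set

/-- `(E, E')` solves, on `[0,T]`, the two-point boundary value problem
`E'' = −2·V·𝔸·E' + 2γ·V·Σ·E`, `E(0) = E₀`, `E'(T) + 4·V·𝐀·E(T) = 0`,
where `V = diagonal v`, `𝔸 = diagonal α`, `𝐀 = diagonal A`, and `Σ = S`. -/
def IsMFGBVPSol (d : ℕ) (T γ : ℝ) (v α A : Fin d → ℝ) (S : Matrix (Fin d) (Fin d) ℝ)
    (E₀ : Fin d → ℝ) (E E' : ℝ → Fin d → ℝ) : Prop :=
  (∀ t ∈ Set.Icc (0 : ℝ) T, HasDerivWithinAt E (E' t) (Set.Icc (0 : ℝ) T) t) ∧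
  (∀ t ∈ Set.Icc (0 : ℝ) T, HasDerivWithinAt E'
      ((-2 : ℝ) • (Matrix.diagonal v * Matrix.diagonal α).mulVec (E' t) +
        (2 * γ) • (Matrix.diagonal v * S).mulVec (E t)) (Set.Icc (0 : ℝ) T) t) ∧
  E 0 = E₀ ∧
  E' T + (4 : ℝ) • (Matrix.diagonal v * Matrix.diagonal A).mulVec (E T) = 0

namespace MFG8

variable {d : ℕ}

noncomputable def bdry (v A : Fin d → ℝ) :
    ((Fin d → ℝ) × (Fin d → ℝ)) →ₗ[ℝ] (Fin d → ℝ) :=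
  LinearMap.snd ℝ _ _ +
    ((4 : ℝ) • (Matrix.diagonal v * Matrix.diagonal A).mulVecLin).comp (LinearMap.fst ℝ _ _)

@[simp] lemma bdry_apply (v A : Fin d → ℝ) (y : (Fin d → ℝ) × (Fin d → ℝ)) :
    bdry v A y = y.2 + (4 : ℝ) • (Matrix.diagonal v * Matrix.diagonal A).mulVec y.1 := rfl

noncomputable def Mlin (γ : ℝ) (v α : Fin d → ℝ) (S : Matrix (Fin d) (Fin d) ℝ) :
    ((Fin d → ℝ) × (Fin d → ℝ)) →ₗ[ℝ] ((Fin d → ℝ) × (Fin d → ℝ)) :=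
  (LinearMap.snd ℝ _ _).prod
    (((-2 : ℝ) • (Matrix.diagonal v * Matrix.diagonal α).mulVecLin).comp (LinearMap.snd ℝ _ _) +
     ((2 * γ) • (Matrix.diagonal v * S).mulVecLin).comp (LinearMap.fst ℝ _ _))

noncomputable def Mop (γ : ℝ) (v α : Fin d → ℝ) (S : Matrix (Fin d) (Fin d) ℝ) :
    ((Fin d → ℝ) × (Fin d → ℝ)) →L[ℝ] ((Fin d → ℝ) × (Fin d → ℝ)) :=
  LinearMap.toContinuousLinearMap (Mlin γ v α S)

@[simp] lemma Mop_apply (γ : ℝ) (v α : Fin d → ℝ) (S : Matrix (Fin d) (Fin d) ℝ)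
    (y : (Fin d → ℝ) × (Fin d → ℝ)) :
    Mop γ v α S y = (y.2, (-2 : ℝ) • (Matrix.diagonal v * Matrix.diagonal α).mulVec y.2 +
      (2 * γ) • (Matrix.diagonal v * S).mulVec y.1) := rfl

noncomputable def flow (γ : ℝ) (v α : Fin d → ℝ) (S : Matrix (Fin d) (Fin d) ℝ)
    (y₀ : (Fin d → ℝ) × (Fin d → ℝ)) (t : ℝ) : (Fin d → ℝ) × (Fin d → ℝ) :=
  NormedSpace.exp (t • Mop γ v α S) y₀

lemma flow_hasDerivAt (γ : ℝ) (v α : Fin d → ℝ) (S : Matrix (Fin d) (Fin d) ℝ)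
    (y₀ : (Fin d → ℝ) × (Fin d → ℝ)) (t : ℝ) :
    HasDerivAt (flow γ v α S y₀) (Mop γ v α S (flow γ v α S y₀ t)) t := by
  have h := (hasDerivAt_exp_smul_const' (𝕂 := ℝ) (Mop γ v α S) t).clm_apply
    (hasDerivAt_const t y₀)
  have e : Mop γ v α S (flow γ v α S y₀ t) = (Mop γ v α S * NormedSpace.exp (t • Mop γ v α S)) y₀
      + (NormedSpace.exp (t • Mop γ v α S)) 0 := by
    simp [flow, ContinuousLinearMap.mul_apply]
  rw [e]
  exact h

@[simp] lemma flow_zero (γ : ℝ) (v α : Fin d → ℝ) (S : Matrix (Fin d) (Fin d) ℝ)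
    (y₀ : (Fin d → ℝ) × (Fin d → ℝ)) : flow γ v α S y₀ 0 = y₀ := by
  simp [flow]


noncomputable def Npert (γ : ℝ) (v : Fin d → ℝ) (S : Matrix (Fin d) (Fin d) ℝ) :
    (Fin d → ℝ) →ₗ[ℝ] (((Fin d → ℝ) × (Fin d → ℝ)) →L[ℝ] ((Fin d → ℝ) × (Fin d → ℝ))) where
  toFun α := LinearMap.toContinuousLinearMap
    (LinearMap.prod 0
      (((-2 : ℝ) • (Matrix.diagonal v * Matrix.diagonal α).mulVecLin).comp (LinearMap.snd ℝ _ _)))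
  map_add' a b := by
    apply ContinuousLinearMap.ext; intro y
    refine Prod.ext (by simp) ?_
    funext i
    simp [Matrix.diagonal_mul_diagonal, Matrix.mulVec_diagonal]
    ring
  map_smul' c a := by
    apply ContinuousLinearMap.ext; intro y
    refine Prod.ext (by simp) ?_
    funext i
    simp [Matrix.diagonal_mul_diagonal, Matrix.smul_mulVec, Matrix.mulVec_diagonal]
    ring

lemma Mop_eq (γ : ℝ) (v α : Fin d → ℝ) (S : Matrix (Fin d) (Fin d) ℝ) :
    Mop γ v α S = Mop γ v 0 S + Npert γ v S α := by
  apply ContinuousLinearMap.ext; intro y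
  have h0 : (Matrix.diagonal (0 : Fin d → ℝ)) = 0 := Matrix.diagonal_zero
  simp [Mop, Mlin, Npert, h0, Prod.ext_iff]
  abel

lemma continuous_Mop (γ : ℝ) (v : Fin d → ℝ) (S : Matrix (Fin d) (Fin d) ℝ) :
    Continuous fun α : Fin d → ℝ => Mop γ v α S := by
  have : (fun α : Fin d → ℝ => Mop γ v α S)
      = fun α => Mop γ v 0 S + Npert γ v S α := by
    funext α; exact Mop_eq γ v α S
  rw [this]
  exact continuous_const.add (Npert γ v S).continuous_of_finiteDimensional

noncomputable def Llin (T γ : ℝ) (v α A : Fin d → ℝ) (S : Matrix (Fin d) (Fin d) ℝ) :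
    (Fin d → ℝ) →ₗ[ℝ] (Fin d → ℝ) :=
  (bdry v A).comp
    (((NormedSpace.exp (T • Mop γ v α S)).toLinearMap).comp (LinearMap.inr ℝ _ _))

lemma Llin_apply (T γ : ℝ) (v α A : Fin d → ℝ) (S : Matrix (Fin d) (Fin d) ℝ) (w : Fin d → ℝ) :
    Llin T γ v α A S w = bdry v A (NormedSpace.exp (T • Mop γ v α S) (0, w)) := rfl

noncomputable def Φmat (v A : Fin d → ℝ) :
    ((((Fin d → ℝ) × (Fin d → ℝ)) →L[ℝ] ((Fin d → ℝ) × (Fin d → ℝ))))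
      →ₗ[ℝ] Matrix (Fin d) (Fin d) ℝ where
  toFun G := LinearMap.toMatrix'
    ((bdry v A).comp ((G.toLinearMap).comp (LinearMap.inr ℝ _ _)))
  map_add' G H := by
    have hc : ((G + H : ((Fin d → ℝ) × (Fin d → ℝ)) →L[ℝ] _).toLinearMap)
        = G.toLinearMap + H.toLinearMap := rfl
    simp only [hc, LinearMap.add_comp, LinearMap.comp_add, map_add]
  map_smul' c G := by
    have hc : ((c • G : ((Fin d → ℝ) × (Fin d → ℝ)) →L[ℝ] _).toLinearMap)
        = c • G.toLinearMap := rfl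
    simp only [hc, LinearMap.smul_comp, LinearMap.comp_smul, _root_.map_smul, RingHom.id_apply]

lemma Φmat_exp_eq (T γ : ℝ) (v α A : Fin d → ℝ) (S : Matrix (Fin d) (Fin d) ℝ) :
    Φmat v A (NormedSpace.exp (T • Mop γ v α S)) = LinearMap.toMatrix' (Llin T γ v α A S) := rfl

lemma continuous_det (T γ : ℝ) (v A : Fin d → ℝ) (S : Matrix (Fin d) (Fin d) ℝ) :
    Continuous fun α : Fin d → ℝ => (LinearMap.toMatrix' (Llin T γ v α A S)).det := by
  have h1 : Continuous fun α : Fin d → ℝ => NormedSpace.exp (T • Mop γ v α S) :=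
    (continuous_iff_continuousAt.2 fun x => (NormedSpace.exp_analytic (𝕂 := ℝ) x).continuousAt).comp ((continuous_Mop γ v S).const_smul T)
  have h2 : Continuous fun α : Fin d → ℝ => Φmat v A (NormedSpace.exp (T • Mop γ v α S)) :=
    (Φmat v A).continuous_of_finiteDimensional.comp h1
  exact h2.matrix_det

lemma injective_of_det_ne_zero (T γ : ℝ) (v α A : Fin d → ℝ) (S : Matrix (Fin d) (Fin d) ℝ)
    (h : (LinearMap.toMatrix' (Llin T γ v α A S)).det ≠ 0) :
    Function.Injective (Llin T γ v α A S) := by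
  set M := LinearMap.toMatrix' (Llin T γ v α A S) with hM
  have hMu : IsUnit M.det := isUnit_iff_ne_zero.2 h
  have key : ∀ w, Llin T γ v α A S w = 0 → w = 0 := by
    intro w hw0
    have hMw : M *ᵥ w = 0 := by
      rw [hM]
      have : (LinearMap.toMatrix' (Llin T γ v α A S)) *ᵥ w
          = Matrix.toLin' (LinearMap.toMatrix' (Llin T γ v α A S)) w := rfl
      rw [this, Matrix.toLin'_toMatrix', hw0]
    calc w = (1 : Matrix (Fin d) (Fin d) ℝ) *ᵥ w := by rw [Matrix.one_mulVec]
    _ = (M⁻¹ * M) *ᵥ w := by rw [Matrix.nonsing_inv_mul M hMu]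
    _ = M⁻¹ *ᵥ (M *ᵥ w) := by rw [Matrix.mulVec_mulVec]
    _ = 0 := by rw [hMw, Matrix.mulVec_zero]
  intro a b hab
  have : Llin T γ v α A S (a - b) = 0 := by rw [map_sub, hab, sub_self]
  exact sub_eq_zero.mp (key _ this)

lemma det_ne_zero_of_injective (T γ : ℝ) (v α A : Fin d → ℝ) (S : Matrix (Fin d) (Fin d) ℝ)
    (h : Function.Injective (Llin T γ v α A S)) :
    (LinearMap.toMatrix' (Llin T γ v α A S)).det ≠ 0 := by
  rw [LinearMap.det_toMatrix' (Llin T γ v α A S)]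
  intro hdet
  have := LinearMap.bot_lt_ker_of_det_eq_zero hdet
  rw [LinearMap.ker_eq_bot.2 h] at this
  exact lt_irrefl _ this


lemma energy (T γ : ℝ) (hT : 0 < T) (hγ : 0 ≤ γ) (v : Fin d → ℝ) (hv : ∀ i, 0 < v i)
    (S : Matrix (Fin d) (Fin d) ℝ) (hS : S.PosSemidef) (A : Fin d → ℝ) (hA : ∀ i, 0 < A i)
    (E E' : ℝ → Fin d → ℝ)
    (h1 : ∀ t ∈ Set.Icc (0:ℝ) T, HasDerivWithinAt E (E' t) (Set.Icc (0:ℝ) T) t)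
    (h2 : ∀ t ∈ Set.Icc (0:ℝ) T, HasDerivWithinAt E'
        ((2*γ) • (Matrix.diagonal v * S).mulVec (E t)) (Set.Icc (0:ℝ) T) t)
    (h0 : E 0 = 0)
    (hTc : E' T + (4:ℝ) • (Matrix.diagonal v * Matrix.diagonal A).mulVec (E T) = 0) :
    E' 0 = 0 := by
  have hmem0 : (0:ℝ) ∈ Set.Icc (0:ℝ) T := ⟨le_refl _, hT.le⟩
  have hmemT : T ∈ Set.Icc (0:ℝ) T := ⟨hT.le, le_refl _⟩
  set h : ℝ → ℝ := fun t => ∑ i, E' t i * E t i / v i with hh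
  set D : ℝ → ℝ := fun t =>
    ∑ i, (((2*γ) • (Matrix.diagonal v * S).mulVec (E t)) i * E t i + E' t i * E' t i) / v i
    with hD
  -- derivative of h
  have hder : ∀ t ∈ Set.Icc (0:ℝ) T, HasDerivWithinAt h (D t) (Set.Icc (0:ℝ) T) t := by
    intro t ht
    refine HasDerivWithinAt.fun_sum fun i _ => ?_
    exact (((hasDerivWithinAt_pi.1 (h2 t ht)) i).mul
      ((hasDerivWithinAt_pi.1 (h1 t ht)) i)).div_const _
  -- nonnegativity of D
  have hDnonneg : ∀ t, 0 ≤ D t := by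
    intro t
    have hsplit : D t = (∑ i, ((2*γ) • (Matrix.diagonal v * S).mulVec (E t)) i * E t i / v i)
        + ∑ i, E' t i * E' t i / v i := by
      rw [hD, ← Finset.sum_add_distrib]
      exact Finset.sum_congr rfl fun i _ => by rw [add_div]
    have hterm1 : ∀ i, ((2*γ) • (Matrix.diagonal v * S).mulVec (E t)) i * E t i / v i
        = (2*γ) * ((S.mulVec (E t)) i * E t i) := by
      intro i
      rw [Pi.smul_apply, smul_eq_mul, ← Matrix.mulVec_mulVec, Matrix.mulVec_diagonal]
      have := (hv i).ne'
      field_simp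
    have h1' : 0 ≤ ∑ i, ((2*γ) • (Matrix.diagonal v * S).mulVec (E t)) i * E t i / v i := by
      simp only [hterm1, ← Finset.mul_sum]
      have hps := hS.dotProduct_mulVec_nonneg (E t)
      rw [star_trivial] at hps
      have hdd : ∑ i, S.mulVec (E t) i * E t i = E t ⬝ᵥ S.mulVec (E t) := by
        rw [dotProduct_comm]; rfl
      rw [hdd]
      positivity
    have h2' : 0 ≤ ∑ i, E' t i * E' t i / v i := by
      refine Finset.sum_nonneg fun i _ => ?_
      exact div_nonneg (mul_self_nonneg _) (hv i).le
    rw [hsplit]; exact add_nonneg h1' h2'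
  -- h is monotone on the interval
  have hmono : MonotoneOn h (Set.Icc (0:ℝ) T) := by
    refine monotoneOn_of_deriv_nonneg (convex_Icc _ _)
      (fun t ht => (hder t ht).continuousWithinAt) ?_ ?_
    · intro t ht
      rw [interior_Icc] at ht
      exact ((hder t ⟨ht.1.le, ht.2.le⟩).hasDerivAt
        (Icc_mem_nhds ht.1 ht.2)).differentiableAt.differentiableWithinAt
    · intro t ht
      rw [interior_Icc] at ht
      rw [((hder t ⟨ht.1.le, ht.2.le⟩).hasDerivAt (Icc_mem_nhds ht.1 ht.2)).deriv]
      exact hDnonneg t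
  -- boundary values
  have h_at0 : h 0 = 0 := by simp [hh, h0]
  have h_atT : h T ≤ 0 := by
    have hE'T : E' T = -((4:ℝ) • (Matrix.diagonal v * Matrix.diagonal A).mulVec (E T)) :=
      eq_neg_of_add_eq_zero_left hTc
    rw [hh]
    refine Finset.sum_nonpos fun i _ => ?_
    rw [hE'T]
    have : (-((4:ℝ) • (Matrix.diagonal v * Matrix.diagonal A).mulVec (E T))) i
        = -(4 * (v i * A i * E T i)) := by
      simp [Matrix.diagonal_mul_diagonal, Matrix.mulVec_diagonal]
    rw [this]
    have hvi := hv i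
    have hAi := hA i
    have : -(4 * (v i * A i * E T i)) * E T i / v i = -(4 * A i * (E T i * E T i)) * (v i / v i) := by
      field_simp
    rw [this, div_self hvi.ne']
    nlinarith [mul_self_nonneg (E T i)]
  -- h vanishes identically
  have hzero : ∀ t ∈ Set.Icc (0:ℝ) T, h t = 0 := by
    intro t ht
    have l1 : h 0 ≤ h t := hmono hmem0 ht ht.1
    have l2 : h t ≤ h T := hmono ht hmemT ht.2
    linarith [h_at0, h_atT]
  -- the derivative of h at 0 within the interval is 0
  have hD0 : D 0 = 0 := by
    have hconst : HasDerivWithinAt (fun _ : ℝ => (0:ℝ)) (D 0) (Set.Icc (0:ℝ) T) 0 :=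
      (hder 0 hmem0).congr (fun x hx => (hzero x hx).symm) (hzero 0 hmem0).symm
    have hud : UniqueDiffWithinAt ℝ (Set.Icc (0:ℝ) T) 0 := (uniqueDiffOn_Icc hT) 0 hmem0
    have e1 := hconst.derivWithin hud
    have e2 := (hasDerivWithinAt_const (0:ℝ) (Set.Icc (0:ℝ) T) (0:ℝ)).derivWithin hud
    rw [e1] at e2; exact e2
  -- conclude E' 0 = 0
  have hD0' : D 0 = ∑ i, E' 0 i * E' 0 i / v i := by
    rw [hD]
    refine Finset.sum_congr rfl fun i _ => ?_
    rw [h0]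
    simp [Matrix.mulVec_zero]
  rw [hD0'] at hD0
  funext i
  have hsum := hD0
  have hterm : ∀ j ∈ Finset.univ, (0:ℝ) ≤ E' 0 j * E' 0 j / v j :=
    fun j _ => div_nonneg (mul_self_nonneg _) (hv j).le
  have := (Finset.sum_eq_zero_iff_of_nonneg hterm).1 hsum i (Finset.mem_univ i)
  have hvi := (hv i).ne'
  rw [div_eq_zero_iff] at this
  rcases this with h' | h'
  · exact mul_self_eq_zero.1 h'
  · exact absurd h' hvi


/-- Any solution of the ODE system coincides with the exponential flow with the same
initial data. -/
lemma sol_eq_flow (T γ : ℝ) (v α : Fin d → ℝ) (S : Matrix (Fin d) (Fin d) ℝ)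
    (E E' : ℝ → Fin d → ℝ)
    (h1 : ∀ t ∈ Set.Icc (0:ℝ) T, HasDerivWithinAt E (E' t) (Set.Icc (0:ℝ) T) t)
    (h2 : ∀ t ∈ Set.Icc (0:ℝ) T, HasDerivWithinAt E'
        ((-2 : ℝ) • (Matrix.diagonal v * Matrix.diagonal α).mulVec (E' t) +
          (2 * γ) • (Matrix.diagonal v * S).mulVec (E t)) (Set.Icc (0:ℝ) T) t) :
    ∀ t ∈ Set.Icc (0:ℝ) T, (E t, E' t) = flow γ v α S (E 0, E' 0) t := by
  set M := Mop γ v α S with hM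
  set f : ℝ → (Fin d → ℝ) × (Fin d → ℝ) := fun t => (E t, E' t) with hf
  set g : ℝ → (Fin d → ℝ) × (Fin d → ℝ) := flow γ v α S (E 0, E' 0) with hg
  have hfd : ∀ t ∈ Set.Icc (0:ℝ) T, HasDerivWithinAt f (M (f t)) (Set.Icc (0:ℝ) T) t := by
    intro t ht
    have := (h1 t ht).prodMk (h2 t ht)
    rw [hM, Mop_apply]
    exact this
  have hgd : ∀ t ∈ Set.Icc (0:ℝ) T, HasDerivWithinAt g (M (g t)) (Set.Icc (0:ℝ) T) t :=
    fun t _ => (flow_hasDerivAt γ v α S (E 0, E' 0) t).hasDerivWithinAt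
  have key : ∀ (h : ℝ → (Fin d → ℝ) × (Fin d → ℝ)),
      (∀ t ∈ Set.Icc (0:ℝ) T, HasDerivWithinAt h (M (h t)) (Set.Icc (0:ℝ) T) t) →
      ∀ t ∈ Set.Ico (0:ℝ) T, HasDerivWithinAt h (M (h t)) (Set.Ici t) t := by
    intro h hh t ht
    refine (hh t ⟨ht.1, ht.2.le⟩).mono_of_mem_nhdsWithin ?_
    rw [mem_nhdsWithin]
    exact ⟨Set.Iio T, isOpen_Iio, ht.2, fun x hx => ⟨le_trans ht.1 hx.2, le_of_lt hx.1⟩⟩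
  have h00 : f 0 = g 0 := by rw [hg, flow_zero]
  exact ODE_solution_unique_of_mem_Icc_right
    (v := fun _ y => M y) (s := fun _ => Set.univ) (K := ‖M‖₊)
    (fun _ _ => (M.lipschitz).lipschitzOnWith)
    (fun t ht => (hfd t ht).continuousWithinAt) (key f hfd) (fun _ _ => trivial)
    (fun t ht => (hgd t ht).continuousWithinAt) (key g hgd) (fun _ _ => trivial) h00

/-- The flow components solve the ODE system. -/
lemma flow_sol (T γ : ℝ) (v α : Fin d → ℝ) (S : Matrix (Fin d) (Fin d) ℝ)
    (y₀ : (Fin d → ℝ) × (Fin d → ℝ)) :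
    (∀ t ∈ Set.Icc (0:ℝ) T, HasDerivWithinAt (fun s => (flow γ v α S y₀ s).1)
        ((flow γ v α S y₀ t).2) (Set.Icc (0:ℝ) T) t) ∧
    (∀ t ∈ Set.Icc (0:ℝ) T, HasDerivWithinAt (fun s => (flow γ v α S y₀ s).2)
        ((-2 : ℝ) • (Matrix.diagonal v * Matrix.diagonal α).mulVec ((flow γ v α S y₀ t).2) +
          (2 * γ) • (Matrix.diagonal v * S).mulVec ((flow γ v α S y₀ t).1))
        (Set.Icc (0:ℝ) T) t) := by
  constructor
  · intro t _
    have h := (flow_hasDerivAt γ v α S y₀ t).hasDerivWithinAt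
      (s := Set.Icc (0:ℝ) T)
    have h1 := ((ContinuousLinearMap.fst ℝ (Fin d → ℝ) (Fin d → ℝ)).hasFDerivAt.comp_hasDerivWithinAt t h)
    exact h1
  · intro t _
    have h := (flow_hasDerivAt γ v α S y₀ t).hasDerivWithinAt
      (s := Set.Icc (0:ℝ) T)
    have h2 := ((ContinuousLinearMap.snd ℝ (Fin d → ℝ) (Fin d → ℝ)).hasFDerivAt.comp_hasDerivWithinAt t h)
    exact h2


lemma bdry_flow_split (T γ : ℝ) (v α A : Fin d → ℝ) (S : Matrix (Fin d) (Fin d) ℝ)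
    (E₀ w : Fin d → ℝ) :
    bdry v A (NormedSpace.exp (T • Mop γ v α S) (E₀, w))
      = bdry v A (NormedSpace.exp (T • Mop γ v α S) (E₀, 0)) + Llin T γ v α A S w := by
  rw [Llin_apply]
  have hsplit : (E₀, w) = ((E₀, (0 : Fin d → ℝ)) : (Fin d → ℝ) × (Fin d → ℝ))
      + ((0 : Fin d → ℝ), w) := by
    simp [Prod.ext_iff]
  rw [hsplit, map_add, map_add]

lemma Llin_zero_injective (T γ : ℝ) (hT : 0 < T) (hγ : 0 ≤ γ)
    (v : Fin d → ℝ) (hv : ∀ i, 0 < v i)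
    (S : Matrix (Fin d) (Fin d) ℝ) (hS : S.PosSemidef)
    (A : Fin d → ℝ) (hA : ∀ i, 0 < A i) :
    Function.Injective (Llin T γ v (0 : Fin d → ℝ) A S) := by
  have key : ∀ w, Llin T γ v 0 A S w = 0 → w = 0 := by
    intro w hw
    set E : ℝ → Fin d → ℝ := fun t => (flow γ v 0 S (0, w) t).1 with hE
    set E' : ℝ → Fin d → ℝ := fun t => (flow γ v 0 S (0, w) t).2 with hE'
    obtain ⟨hs1, hs2⟩ := flow_sol T γ v 0 S ((0 : Fin d → ℝ), w)
    have h2' : ∀ t ∈ Set.Icc (0:ℝ) T, HasDerivWithinAt E'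
        ((2*γ) • (Matrix.diagonal v * S).mulVec (E t)) (Set.Icc (0:ℝ) T) t := by
      intro t ht
      have h := hs2 t ht
      simpa [Matrix.diagonal_zero] using h
    have h0 : E 0 = 0 := by rw [hE]; simp
    have hTc : E' T + (4:ℝ) • (Matrix.diagonal v * Matrix.diagonal A).mulVec (E T) = 0 := by
      rw [Llin_apply] at hw
      have : bdry v A (flow γ v 0 S (0, w) T) = 0 := hw
      simpa [bdry_apply] using this
    have hE'0 := energy T γ hT hγ v hv S hS A hA E E' hs1 h2' h0 hTc
    rw [hE'] at hE'0
    simpa using hE'0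
  intro a b hab
  have : Llin T γ v 0 A S (a - b) = 0 := by rw [map_sub, hab, sub_self]
  exact sub_eq_zero.mp (key _ this)

end MFG8

/-- **Unique solvability of the mean-field boundary value problem (identical agents).**
For `T > 0`, `γ ≥ 0`, `V` diagonal positive, `Σ` symmetric positive semidefinite and `𝐀`
diagonal positive, there is `α₀ > 0` such that for every diagonal matrix
`𝔸 = diagonal α` with nonnegative entries and operator norm at most `α₀` (equivalently,
`α i ≤ α₀` for all `i`), and every initial vector `E₀`, the problem
`E'' = −2·V·𝔸·E' + 2γ·V·Σ·E`, `E(0) = E₀`, `E'(T) + 4·V·𝐀·E(T) = 0` has exactly one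
(automatically twice continuously differentiable) solution on `[0,T]`. -/
theorem stmt_8 (d : ℕ) (T γ : ℝ) (hT : 0 < T) (hγ : 0 ≤ γ)
    (v : Fin d → ℝ) (hv : ∀ i, 0 < v i)
    (S : Matrix (Fin d) (Fin d) ℝ) (hS : S.PosSemidef)
    (A : Fin d → ℝ) (hA : ∀ i, 0 < A i) :
    ∃ α₀ : ℝ, 0 < α₀ ∧
      ∀ α : Fin d → ℝ, (∀ i, 0 ≤ α i) → (∀ i, α i ≤ α₀) →
        ∀ E₀ : Fin d → ℝ,
          (∃ E E' : ℝ → Fin d → ℝ, IsMFGBVPSol d T γ v α A S E₀ E E') ∧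
          (∀ E₁ E₁' E₂ E₂' : ℝ → Fin d → ℝ,
            IsMFGBVPSol d T γ v α A S E₀ E₁ E₁' →
            IsMFGBVPSol d T γ v α A S E₀ E₂ E₂' →
            Set.EqOn E₁ E₂ (Set.Icc (0 : ℝ) T)) := by
    classical
  have hinj0 : Function.Injective (MFG8.Llin T γ v (0 : Fin d → ℝ) A S) :=
    MFG8.Llin_zero_injective T γ hT hγ v hv S hS A hA
  have hdet0 : (LinearMap.toMatrix' (MFG8.Llin T γ v (0 : Fin d → ℝ) A S)).det ≠ 0 :=
    MFG8.det_ne_zero_of_injective T γ v 0 A S hinj0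
  have hev : ∀ᶠ β in nhds (0 : Fin d → ℝ),
      (LinearMap.toMatrix' (MFG8.Llin T γ v β A S)).det ≠ 0 :=
    ((MFG8.continuous_det T γ v A S).continuousAt (x := 0)).eventually_ne hdet0
  rw [Metric.eventually_nhds_iff] at hev
  obtain ⟨ε, hε, hball⟩ := hev
  refine ⟨ε / 2, by positivity, ?_⟩
  intro α hα0 hαle E₀
  have hαdist : dist α 0 < ε := by
    rw [dist_zero_right]
    have hle : ‖α‖ ≤ ε / 2 := by
      refine (pi_norm_le_iff_of_nonneg (by positivity)).2 fun i => ?_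
      rw [Real.norm_eq_abs, abs_of_nonneg (hα0 i)]
      exact hαle i
    linarith
  have hinj : Function.Injective (MFG8.Llin T γ v α A S) :=
    MFG8.injective_of_det_ne_zero T γ v α A S (hball hαdist)
  have hsurj : Function.Surjective (MFG8.Llin T γ v α A S) :=
    LinearMap.injective_iff_surjective.mp hinj
  constructor
  · -- existence
    obtain ⟨w, hw⟩ := hsurj
      (-(MFG8.bdry v A (NormedSpace.exp (T • MFG8.Mop γ v α S) (E₀, 0))))
    refine ⟨fun t => (MFG8.flow γ v α S (E₀, w) t).1,
            fun t => (MFG8.flow γ v α S (E₀, w) t).2,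
            (MFG8.flow_sol T γ v α S (E₀, w)).1,
            (MFG8.flow_sol T γ v α S (E₀, w)).2,
            by simp, ?_⟩
    have hflowT : MFG8.flow γ v α S (E₀, w) T
        = NormedSpace.exp (T • MFG8.Mop γ v α S) (E₀, w) := rfl
    have hb : MFG8.bdry v A (MFG8.flow γ v α S (E₀, w) T) = 0 := by
      rw [hflowT, MFG8.bdry_flow_split T γ v α A S E₀ w, hw]
      exact add_neg_cancel _
    simpa [MFG8.bdry_apply] using hb
  · -- uniqueness
    intro E₁ E₁' E₂ E₂' hsol1 hsol2
    obtain ⟨h11, h12, h13, h14⟩ := hsol1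
    obtain ⟨h21, h22, h23, h24⟩ := hsol2
    have k1 := MFG8.sol_eq_flow T γ v α S E₁ E₁' h11 h12
    have k2 := MFG8.sol_eq_flow T γ v α S E₂ E₂' h21 h22
    have hmemT : T ∈ Set.Icc (0:ℝ) T := ⟨hT.le, le_refl T⟩
    have key : ∀ (F F' : ℝ → Fin d → ℝ),
        (∀ t ∈ Set.Icc (0:ℝ) T, (F t, F' t) = MFG8.flow γ v α S (F 0, F' 0) t) →
        F 0 = E₀ →
        F' T + (4 : ℝ) • (Matrix.diagonal v * Matrix.diagonal A).mulVec (F T) = 0 →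
        MFG8.Llin T γ v α A S (F' 0)
          = -(MFG8.bdry v A (NormedSpace.exp (T • MFG8.Mop γ v α S) (E₀, 0))) := by
      intro F F' hk h0 hTc
      have hbT : MFG8.bdry v A (F T, F' T) = 0 := by simpa [MFG8.bdry_apply] using hTc
      have hfl := hk T hmemT
      rw [h0] at hfl
      rw [hfl] at hbT
      have : MFG8.flow γ v α S (E₀, F' 0) T
          = NormedSpace.exp (T • MFG8.Mop γ v α S) (E₀, F' 0) := rfl
      rw [this, MFG8.bdry_flow_split T γ v α A S E₀ (F' 0)] at hbT
      exact eq_neg_of_add_eq_zero_right hbT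
    have e1 := key E₁ E₁' (by simpa [h13] using k1) h13 h14
    have e2 := key E₂ E₂' (by simpa [h23] using k2) h23 h24
    have hE'eq : E₁' 0 = E₂' 0 := hinj (e1.trans e2.symm)
    intro t ht
    have a1 := k1 t ht
    have a2 := k2 t ht
    rw [h13] at a1
    rw [h23] at a2
    calc E₁ t = (MFG8.flow γ v α S (E₀, E₁' 0) t).1 := congrArg Prod.fst a1
    _ = (MFG8.flow γ v α S (E₀, E₂' 0) t).1 := by rw [hE'eq]
    _ = E₂ t := (congrArg Prod.fst a2).symm
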